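/- For each integer l ≤ −1, define the operator T_l on L²([0,1], r dr) by (T_l f)(s) = −(∑_{n=0}^{−l} s^{2n}) ∫₀^s (r/s)^{1−l} f(r) dr + (1/(1−s²)) ∫_s^1 (rs)^{1−l} f(r) dr for 0 < s < 1. Then ∫₀¹ |(T_l f)(s)|² s ds ≤ 25 ∫₀¹ |f(r)|² r dr for all f ∈ L²([0,1], r dr), with the bound independent of l. -/

import Mathlib

open MeasureTheory

/-- The operator `T_l`, `l ≤ −1`, of Lemma 3. -/
noncomputable def Tl (l : ℤ) (f : ℝ → ℂ) (s : ℝ) : ℂ :=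
  -((∑ n ∈ Finset.range ((-l).toNat + 1), (s:ℂ) ^ (2 * n)) *
      ∫ r in Set.Ioc (0:ℝ) s, ((r / s : ℝ) : ℂ) ^ ((1 - l).toNat) * f r) +
    (1 / (1 - (s:ℂ) ^ 2)) *
      ∫ r in Set.Ioc s 1, ((r * s : ℝ) : ℂ) ^ ((1 - l).toNat) * f r

/-!
With `m = 1 - l ≥ 2`, every term of the geometric factor satisfies `s^(2n) (r/s)^m ≤ (r/s) r^n`,
so `|T_l f(s)| ≤ ∫₀¹ k(s,r) |f(r)| r dr` for the `l`-independent kernel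
`k(s,r) = 1/(s(1-r))` (`r ≤ s`), `k(s,r) = r s²/(1-s²)` (`r > s`).
The Schur test in `L²(r dr)` with the test function `w(x) = (x(1-x))^(-1/2)` then applies:
`∫ k(s,r) w(r) r dr ≤ 3 w(s)` and `∫ w(s) k(s,r) s ds ≤ 3 w(r)`, so `‖T_l f‖² ≤ 9 ‖f‖²`.
-/

open Set ENNReal Function

section SchurTest

variable {X : Type*} [MeasurableSpace X] {μ : Measure X}

theorem ENNReal.sq_lintegral_mul_le {u v : X → ℝ≥0∞} (hu : AEMeasurable u μ)
    (hv : AEMeasurable v μ) :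
    (∫⁻ x, u x * v x ∂μ) ^ 2 ≤ (∫⁻ x, u x ^ 2 ∂μ) * ∫⁻ x, v x ^ 2 ∂μ := by
  have holder := ENNReal.lintegral_mul_le_Lp_mul_Lq μ Real.HolderConjugate.two_two hu hv
  simp only [Pi.mul_apply, ENNReal.rpow_two] at holder
  calc (∫⁻ x, u x * v x ∂μ) ^ 2
      ≤ ((∫⁻ x, u x ^ 2 ∂μ) ^ (1 / 2 : ℝ) * (∫⁻ x, v x ^ 2 ∂μ) ^ (1 / 2 : ℝ)) ^ 2 := by
        gcongr
    _ = (∫⁻ x, u x ^ 2 ∂μ) * ∫⁻ x, v x ^ 2 ∂μ := by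
        rw [mul_pow, ← ENNReal.rpow_two, ← ENNReal.rpow_two, ← ENNReal.rpow_mul,
          ← ENNReal.rpow_mul]
        norm_num

theorem ENNReal.sq_lintegral_mul_le_lintegral_mul_lintegral_div {w a h : X → ℝ≥0∞}
    (hw : AEMeasurable w μ) (ha : AEMeasurable a μ) (hh : AEMeasurable h μ)
    (h0 : ∀ᵐ x ∂μ, h x ≠ 0) (htop : ∀ᵐ x ∂μ, h x ≠ ∞) :
    (∫⁻ x, w x * a x ∂μ) ^ 2 ≤ (∫⁻ x, w x * h x ∂μ) * ∫⁻ x, w x * (a x ^ 2 / h x) ∂μ := by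
  have hsq : ∀ y : ℝ≥0∞, (y ^ (1 / 2 : ℝ)) ^ 2 = y := fun y => by
    rw [← ENNReal.rpow_natCast, ← ENNReal.rpow_mul]; norm_num
  have hsplit : ∀ᵐ x ∂μ, w x * a x
      = (w x * h x) ^ (1 / 2 : ℝ) * (w x * (a x ^ 2 / h x)) ^ (1 / 2 : ℝ) := by
    filter_upwards [h0, htop] with x hx0 hxtop
    rw [← ENNReal.mul_rpow_of_nonneg _ _ (by norm_num), mul_mul_mul_comm,
      ENNReal.mul_div_cancel hx0 hxtop, ← sq, ← mul_pow, ← ENNReal.rpow_natCast,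
      ← ENNReal.rpow_mul]
    norm_num
  rw [lintegral_congr_ae hsplit]
  have cs := ENNReal.sq_lintegral_mul_le (μ := μ) (u := fun x => (w x * h x) ^ (1 / 2 : ℝ))
    (v := fun x => (w x * (a x ^ 2 / h x)) ^ (1 / 2 : ℝ)) (by fun_prop) (by fun_prop)
  simp only [hsq] at cs
  exact cs

theorem ENNReal.lintegral_sq_lintegral_mul_le_of_schur [SFinite μ] {K : X → X → ℝ≥0∞}
    (hK : Measurable (uncurry K)) {h : X → ℝ≥0∞} (hh : Measurable h)
    (h0 : ∀ᵐ x ∂μ, h x ≠ 0) (htop : ∀ᵐ x ∂μ, h x ≠ ∞) {C₁ C₂ : ℝ≥0∞}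
    (hrow : ∀ᵐ x ∂μ, ∫⁻ y, K x y * h y ∂μ ≤ C₁ * h x)
    (hcol : ∀ᵐ y ∂μ, ∫⁻ x, h x * K x y ∂μ ≤ C₂ * h y) {g : X → ℝ≥0∞} (hg : AEMeasurable g μ) :
    ∫⁻ x, (∫⁻ y, K x y * g y ∂μ) ^ 2 ∂μ ≤ C₁ * C₂ * ∫⁻ y, g y ^ 2 ∂μ := by
  obtain ⟨g', hg', hgg'⟩ := hg
  have hKg : ∀ x, ∫⁻ y, K x y * g y ∂μ = ∫⁻ y, K x y * g' y ∂μ := fun x =>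
    lintegral_congr_ae (hgg'.mono fun y hy => by simp only [hy])
  have hg2 : ∫⁻ y, g y ^ 2 ∂μ = ∫⁻ y, g' y ^ 2 ∂μ :=
    lintegral_congr_ae (hgg'.mono fun y hy => by simp only [hy])
  rw [hg2]
  simp_rw [hKg]
  set q : X → ℝ≥0∞ := fun y => g' y ^ 2 / h y
  have hq : Measurable q := (hg'.pow_const 2).div hh
  have hKq : Measurable (uncurry fun x y => h x * K x y * q y) :=
    ((hh.comp measurable_fst).mul hK).mul (hq.comp measurable_snd)
  calc ∫⁻ x, (∫⁻ y, K x y * g' y ∂μ) ^ 2 ∂μ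
      ≤ ∫⁻ x, (∫⁻ y, K x y * h y ∂μ) * ∫⁻ y, K x y * q y ∂μ ∂μ :=
        lintegral_mono fun x => ENNReal.sq_lintegral_mul_le_lintegral_mul_lintegral_div
          hK.of_uncurry_left.aemeasurable hg'.aemeasurable hh.aemeasurable h0 htop
    _ ≤ ∫⁻ x, C₁ * ∫⁻ y, h x * K x y * q y ∂μ ∂μ := by
        refine lintegral_mono_ae (hrow.mono fun x hx => ?_)
        simp_rw [mul_assoc (h x)]
        rw [lintegral_const_mul (h x) (f := fun y => K x y * q y) (hK.of_uncurry_left.mul hq),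
          ← mul_assoc]
        gcongr
    _ = C₁ * ∫⁻ y, (∫⁻ x, h x * K x y ∂μ) * q y ∂μ := by
        rw [lintegral_const_mul C₁ (f := fun x => ∫⁻ y, h x * K x y * q y ∂μ)
          hKq.lintegral_prod_right', lintegral_lintegral_swap
          hKq.aemeasurable]
        congr 1
        refine lintegral_congr fun y => ?_
        exact lintegral_mul_const (q y) (f := fun x => h x * K x y) (hh.mul hK.of_uncurry_right)
    _ ≤ C₁ * ∫⁻ y, C₂ * (h y * q y) ∂μ := by
        gcongr C₁ * ?_
        refine lintegral_mono_ae (hcol.mono fun y hy => ?_)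
        rw [← mul_assoc]
        gcongr
    _ = C₁ * C₂ * ∫⁻ y, g' y ^ 2 ∂μ := by
        rw [lintegral_const_mul C₂ (f := fun y => h y * q y) (hh.mul hq), mul_assoc]
        congr 2
        refine lintegral_congr_ae ?_
        filter_upwards [h0, htop] with y hy0 hytop
        exact ENNReal.mul_div_cancel hy0 hytop

end SchurTest

theorem enorm_mul_integral_le {α : Type*} [MeasurableSpace α] {μ : Measure α} (c : ℂ)
    {φ : α → ℂ} (f : α → ℂ) {k : α → ℝ≥0∞} (hk : ∀ᵐ x ∂μ, ‖c * φ x‖ₑ ≤ k x) :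
    ‖c * ∫ x, φ x * f x ∂μ‖ₑ ≤ ∫⁻ x, k x * ‖f x‖ₑ ∂μ :=
  calc ‖c * ∫ x, φ x * f x ∂μ‖ₑ = ‖∫ x, c * φ x * f x ∂μ‖ₑ := by
        simp_rw [mul_assoc, integral_const_mul]
    _ ≤ ∫⁻ x, ‖c * φ x * f x‖ₑ ∂μ := enorm_integral_le_lintegral_enorm _
    _ ≤ ∫⁻ x, k x * ‖f x‖ₑ ∂μ :=
        lintegral_mono_ae (hk.mono fun x hx => by rw [enorm_mul]; gcongr)

theorem lintegral_Ioc_ofReal_eq_sub_of_hasDerivAt {a b : ℝ} (hab : a ≤ b) {g g' : ℝ → ℝ}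
    (hcont : ContinuousOn g (Icc a b)) (hderiv : ∀ x ∈ Ioo a b, HasDerivAt g (g' x) x)
    (hpos : ∀ x ∈ Ioo a b, 0 ≤ g' x) :
    ∫⁻ x in Ioc a b, ENNReal.ofReal (g' x) = ENNReal.ofReal (g b - g a) := by
  have hint : IntegrableOn g' (Ioc a b) :=
    intervalIntegral.integrableOn_deriv_of_nonneg hcont hderiv hpos
  have hnn : 0 ≤ᵐ[volume.restrict (Ioc a b)] g' :=
    ae_restrict_of_ae_eq_of_ae_restrict Ioo_ae_eq_Ioc
      ((ae_restrict_iff' measurableSet_Ioo).2 (ae_of_all _ hpos))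
  rw [← ofReal_integral_eq_lintegral_ofReal hint hnn, ← intervalIntegral.integral_of_le hab,
    intervalIntegral.integral_eq_sub_of_hasDerivAt_of_le hab hcont hderiv
      ((intervalIntegrable_iff_integrableOn_Ioc_of_le hab).2 hint)]

theorem lintegral_Ioc_le_ofReal_mul_of_le {a b c I : ℝ} {F : ℝ → ℝ≥0∞} {G : ℝ → ℝ} (hc : 0 ≤ c)
    (hFG : ∀ x ∈ Ioo a b, F x ≤ ENNReal.ofReal (c * G x))
    (hG : ∫⁻ x in Ioc a b, ENNReal.ofReal (G x) ≤ ENNReal.ofReal I) :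
    ∫⁻ x in Ioc a b, F x ≤ ENNReal.ofReal (c * I) :=
  calc ∫⁻ x in Ioc a b, F x = ∫⁻ x in Ioo a b, F x := setLIntegral_congr Ioo_ae_eq_Ioc.symm
    _ ≤ ∫⁻ x in Ioo a b, ENNReal.ofReal c * ENNReal.ofReal (G x) :=
        setLIntegral_mono' measurableSet_Ioo fun x hx => (hFG x hx).trans_eq (ofReal_mul hc)
    _ = ENNReal.ofReal c * ∫⁻ x in Ioc a b, ENNReal.ofReal (G x) := by
        rw [lintegral_const_mul' _ _ ofReal_ne_top, setLIntegral_congr Ioo_ae_eq_Ioc]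
    _ ≤ ENNReal.ofReal (c * I) := by
        rw [ofReal_mul hc]
        gcongr

theorem ENNReal.ofReal_mul_ofReal_mul_ofReal {a b : ℝ} (ha : 0 ≤ a) (hb : 0 ≤ b) (c : ℝ) :
    ENNReal.ofReal a * (ENNReal.ofReal b * ENNReal.ofReal c) = ENNReal.ofReal (a * (b * c)) := by
  rw [ofReal_mul ha, ofReal_mul hb]

theorem exists_pos_sq_eq {x : ℝ} (hx : 0 < x) : ∃ p : ℝ, 0 < p ∧ x = p ^ 2 :=
  ⟨√x, Real.sqrt_pos.2 hx, (Real.sq_sqrt hx.le).symm⟩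

theorem hasDerivAt_sqrt_one_sub {x : ℝ} (hx : x < 1) :
    HasDerivAt (fun y => √(1 - y)) (-(2 * √(1 - x))⁻¹) x := by
  refine (((hasDerivAt_id x).const_sub 1).sqrt (by simp; linarith)).congr_deriv ?_
  rw [neg_div, one_div, id]

theorem lintegral_Ioc_inv_one_sub_mul_sqrt_le {b : ℝ} (hb0 : 0 ≤ b) (hb1 : b < 1) :
    ∫⁻ x in Ioc 0 b, ENNReal.ofReal ((1 - x) * √(1 - x))⁻¹
      ≤ ENNReal.ofReal (2 * (√(1 - b))⁻¹) := by
  have hsqrt : ∀ x ∈ Icc 0 b, 0 < √(1 - x) := fun x hx => Real.sqrt_pos.2 (by linarith [hx.2])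
  have hderiv : ∀ x ∈ Ioo 0 b,
      HasDerivAt (fun y => 2 * (√(1 - y))⁻¹) ((1 - x) * √(1 - x))⁻¹ x := by
    intro x hx
    have h1x : 0 < √(1 - x) := hsqrt x (Ioo_subset_Icc_self hx)
    refine (((hasDerivAt_sqrt_one_sub (hx.2.trans hb1)).inv h1x.ne').const_mul 2).congr_deriv ?_
    rw [Real.sq_sqrt (by linarith [hx.2])]
    field_simp
  rw [lintegral_Ioc_ofReal_eq_sub_of_hasDerivAt hb0
    (ContinuousOn.mul continuousOn_const (ContinuousOn.inv₀ (by fun_prop)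
      fun x hx => (hsqrt x hx).ne')) hderiv
    fun x hx => (inv_pos.2 (mul_pos (by linarith [hx.2]) (hsqrt x (Ioo_subset_Icc_self hx)))).le]
  exact ofReal_le_ofReal (by simp)

theorem lintegral_Ioc_inv_sqrt_one_sub {a : ℝ} (ha : a ≤ 1) :
    ∫⁻ x in Ioc a 1, ENNReal.ofReal (√(1 - x))⁻¹ = ENNReal.ofReal (2 * √(1 - a)) := by
  have hderiv : ∀ x ∈ Ioo a 1, HasDerivAt (fun y => -(2 * √(1 - y))) (√(1 - x))⁻¹ x := by
    intro x hx
    refine ((hasDerivAt_sqrt_one_sub hx.2).const_mul 2).neg.congr_deriv ?_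
    field_simp
  rw [lintegral_Ioc_ofReal_eq_sub_of_hasDerivAt ha (by fun_prop) hderiv fun x _ => by positivity]
  simp

noncomputable def radialMeasure : Measure ℝ :=
  (volume.restrict (Ioc 0 1)).withDensity fun r => ENNReal.ofReal r

instance : SFinite radialMeasure := by
  unfold radialMeasure; infer_instance

theorem lintegral_radialMeasure (g : ℝ → ℝ≥0∞) :
    ∫⁻ r, g r ∂radialMeasure = ∫⁻ r in Ioc 0 1, ENNReal.ofReal r * g r :=
  lintegral_withDensity_eq_lintegral_mul_non_measurable _ measurable_id.ennreal_ofReal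
    (ae_of_all _ fun _ => ofReal_lt_top) g

theorem ae_radialMeasure_mem_Ioo : ∀ᵐ r ∂radialMeasure, r ∈ Ioo 0 1 :=
  (withDensity_absolutelyContinuous _ _).ae_le
    (ae_restrict_of_ae_eq_of_ae_restrict Ioo_ae_eq_Ioc (ae_restrict_mem measurableSet_Ioo))

theorem lintegral_radialMeasure_enorm_sq (F : ℝ → ℂ) :
    ∫⁻ r, ‖F r‖ₑ ^ 2 ∂radialMeasure = ∫⁻ r in Ioc 0 1, ‖‖F r‖ ^ 2 * r‖ₑ := by
  rw [lintegral_radialMeasure]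
  refine setLIntegral_congr_fun measurableSet_Ioc fun r hr => ?_
  rw [enorm_mul, enorm_pow, enorm_norm, Real.enorm_of_nonneg hr.1.le, mul_comm]

theorem ofReal_setIntegral_le_lintegral_radialMeasure (F : ℝ → ℂ) :
    ENNReal.ofReal (∫ r in Ioc 0 1, ‖F r‖ ^ 2 * r) ≤ ∫⁻ r, ‖F r‖ₑ ^ 2 ∂radialMeasure := by
  rw [lintegral_radialMeasure_enorm_sq]
  exact (Real.ofReal_le_enorm _).trans (enorm_integral_le_lintegral_enorm _)

theorem ofReal_setIntegral_eq_lintegral_radialMeasure {F : ℝ → ℂ}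
    (hF : IntegrableOn (fun r => ‖F r‖ ^ 2 * r) (Ioc 0 1)) :
    ENNReal.ofReal (∫ r in Ioc 0 1, ‖F r‖ ^ 2 * r) = ∫⁻ r, ‖F r‖ₑ ^ 2 ∂radialMeasure := by
  rw [lintegral_radialMeasure_enorm_sq, ofReal_integral_eq_lintegral_ofReal hF
    ((ae_restrict_iff' measurableSet_Ioc).2 (ae_of_all _ fun r hr => by have := hr.1; positivity))]
  refine setLIntegral_congr_fun measurableSet_Ioc fun r hr => ?_
  rw [Real.enorm_of_nonneg (by have := hr.1; positivity)]

noncomputable def majorantKernel (s r : ℝ) : ℝ :=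
  if r ≤ s then 1 / (s * (1 - r)) else r * s ^ 2 / (1 - s ^ 2)

noncomputable def schurWeight (x : ℝ) : ℝ := (√x * √(1 - x))⁻¹

theorem measurable_majorantKernel : Measurable (uncurry majorantKernel) :=
  Measurable.ite (measurableSet_le measurable_snd measurable_fst) (by fun_prop) (by fun_prop)

theorem measurable_schurWeight : Measurable schurWeight := by
  unfold schurWeight; fun_prop

theorem schurWeight_nonneg (x : ℝ) : 0 ≤ schurWeight x := by
  unfold schurWeight; positivity

theorem schurWeight_pos {x : ℝ} (hx : x ∈ Ioo 0 1) : 0 < schurWeight x := by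
  have := Real.sqrt_pos.2 hx.1
  have := Real.sqrt_pos.2 (sub_pos.2 hx.2)
  unfold schurWeight; positivity

theorem pow_mul_div_pow_le {r s : ℝ} (hr : 0 ≤ r) (hrs : r ≤ s) (hs : s ≤ 1) (hs0 : 0 < s)
    {m n : ℕ} (hnm : n < m) : s ^ (2 * n) * (r / s) ^ m ≤ r / s * r ^ n := by
  have hq : 0 ≤ r / s := div_nonneg hr hs0.le
  have hq1 : r / s ≤ 1 := (div_le_one hs0).2 hrs
  have hr1 : r ≤ 1 := hrs.trans hs
  rcases lt_or_ge (2 * n) m with h | h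
  · calc s ^ (2 * n) * (r / s) ^ m = r ^ (2 * n) * (r / s) ^ (m - 2 * n) := by
          rw [← Nat.add_sub_cancel' h.le, pow_add, ← mul_assoc, ← mul_pow,
            mul_div_cancel₀ _ hs0.ne', Nat.add_sub_cancel_left]
      _ ≤ r ^ n * (r / s) :=
          mul_le_mul (pow_le_pow_of_le_one hr hr1 (by omega)) (pow_le_of_le_one hq hq1 (by omega))
            (by positivity) (by positivity)
      _ = r / s * r ^ n := mul_comm _ _
  · calc s ^ (2 * n) * (r / s) ^ m ≤ s ^ m * (r / s) ^ m :=
          mul_le_mul_of_nonneg_right (pow_le_pow_of_le_one hs0.le hs h) (by positivity)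
      _ = r ^ m := by rw [← mul_pow, mul_div_cancel₀ _ hs0.ne']
      _ ≤ r ^ (n + 1) := pow_le_pow_of_le_one hr hr1 hnm
      _ ≤ r / s * r ^ n := by
          rw [pow_succ, mul_comm]
          gcongr
          exact le_div_self hr hs0 hs

theorem sum_pow_mul_div_pow_le {r s : ℝ} (hr : 0 ≤ r) (hrs : r ≤ s) (hs : s < 1) (hs0 : 0 < s)
    (m : ℕ) : ∑ n ∈ Finset.range m, s ^ (2 * n) * (r / s) ^ m ≤ r * (1 / (s * (1 - r))) := by
  have hr1 : r < 1 := hrs.trans_lt hs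
  calc ∑ n ∈ Finset.range m, s ^ (2 * n) * (r / s) ^ m
      ≤ ∑ n ∈ Finset.range m, r / s * r ^ n :=
        Finset.sum_le_sum fun n hn => pow_mul_div_pow_le hr hrs hs.le hs0 (Finset.mem_range.1 hn)
    _ ≤ r / s * (1 / (1 - r)) := by
        rw [← Finset.mul_sum]
        gcongr
        rw [Finset.range_eq_Ico]
        simpa using geom_sum_Ico_le_of_lt_one hr hr1 (m := 0) (n := m)
    _ = r * (1 / (s * (1 - r))) := by
        field_simp

theorem enorm_Tl_le {l : ℤ} (hl : l ≤ -1) (f : ℝ → ℂ) {s : ℝ} (hs : s ∈ Ioo 0 1) :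
    ‖Tl l f s‖ₑ ≤ ∫⁻ r, ENNReal.ofReal (majorantKernel s r) * ‖f r‖ₑ ∂radialMeasure := by
  obtain ⟨hs0, hs1⟩ := hs
  set m := (1 - l).toNat
  have hm : 2 ≤ m := by omega
  have hrange : (-l).toNat + 1 = m := by omega
  have hsum : ∑ n ∈ Finset.range m, (s : ℂ) ^ (2 * n)
      = ((∑ n ∈ Finset.range m, s ^ (2 * n) : ℝ) : ℂ) := by push_cast; rfl
  have hs2 : 0 < 1 - s ^ 2 := by nlinarith
  have hinv : (1 : ℂ) / (1 - (s : ℂ) ^ 2) = ((1 / (1 - s ^ 2) : ℝ) : ℂ) := by push_cast; rfl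
  rw [lintegral_radialMeasure, ← Ioc_union_Ioc_eq_Ioc hs0.le hs1.le,
    lintegral_union measurableSet_Ioc (Ioc_disjoint_Ioc_of_le (le_refl s)), Tl, hrange, hsum, hinv]
  simp_rw [← mul_assoc]
  refine (enorm_add_le _ _).trans (add_le_add ?_ ?_)
  · rw [enorm_neg]
    refine enorm_mul_integral_le _ _ (ae_restrict_of_forall_mem measurableSet_Ioc fun r hr => ?_)
    have hq : 0 ≤ r / s := div_nonneg hr.1.le hs0.le
    rw [majorantKernel, if_pos hr.2, ← ofReal_mul hr.1.le, ← Complex.ofReal_pow,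
      ← Complex.ofReal_mul, ← ofReal_norm, Complex.norm_real, Real.norm_of_nonneg (by positivity),
      Finset.sum_mul]
    exact ofReal_le_ofReal (sum_pow_mul_div_pow_le hr.1.le hr.2 hs1 hs0 m)
  · refine enorm_mul_integral_le _ _ (ae_restrict_of_forall_mem measurableSet_Ioc fun r hr => ?_)
    have hr0 : 0 < r := hs0.trans hr.1
    have hrs : r * s ≤ 1 := mul_le_one₀ hr.2 hs0.le hs1.le
    rw [majorantKernel, if_neg (not_le.2 hr.1), ← ofReal_mul hr0.le, ← Complex.ofReal_pow,
      ← Complex.ofReal_mul, ← ofReal_norm, Complex.norm_real, Real.norm_of_nonneg (by positivity)]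
    refine ofReal_le_ofReal ?_
    calc 1 / (1 - s ^ 2) * (r * s) ^ m ≤ 1 / (1 - s ^ 2) * (r * s) ^ 2 :=
          mul_le_mul_of_nonneg_left (pow_le_pow_of_le_one (by positivity) hrs hm) (by positivity)
      _ = r * (r * s ^ 2 / (1 - s ^ 2)) := by ring

theorem schur_row_lower_le {s : ℝ} (hs0 : 0 < s) (hs1 : s < 1) :
    ∫⁻ r in Ioc 0 s, ENNReal.ofReal r *
        (ENNReal.ofReal (majorantKernel s r) * ENNReal.ofReal (schurWeight r))
      ≤ ENNReal.ofReal (2 * schurWeight s) := by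
  have key : ∀ r ∈ Ioo 0 s, r * (1 / (s * (1 - r)) * schurWeight r)
      ≤ (√s)⁻¹ * ((1 - r) * √(1 - r))⁻¹ := by
    rintro r ⟨hr, hrs⟩
    have : 0 < 1 - r := by linarith
    have : 0 < √(1 - r) := Real.sqrt_pos.2 this
    obtain ⟨p, hp, rfl⟩ := exists_pos_sq_eq hr
    obtain ⟨q, hq, rfl⟩ := exists_pos_sq_eq hs0
    have : p ≤ q := (pow_le_pow_iff_left₀ hp.le hq.le two_ne_zero).1 hrs.le
    rw [schurWeight, Real.sqrt_sq hp.le, Real.sqrt_sq hq.le]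
    field_simp
    nlinarith
  calc _ ≤ ENNReal.ofReal ((√s)⁻¹ * (2 * (√(1 - s))⁻¹)) := by
        refine lintegral_Ioc_le_ofReal_mul_of_le (by positivity) (fun r hr => ?_)
          (lintegral_Ioc_inv_one_sub_mul_sqrt_le hs0.le hs1)
        have : 0 < 1 - r := by linarith [hr.2]
        rw [majorantKernel, if_pos hr.2.le,
          ofReal_mul_ofReal_mul_ofReal hr.1.le (by have := hr.1; positivity)]
        exact ofReal_le_ofReal (key r hr)
    _ = ENNReal.ofReal (2 * schurWeight s) := by
        rw [schurWeight, mul_inv]; ring_nf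

theorem schur_row_upper_le {s : ℝ} (hs0 : 0 < s) (hs1 : s < 1) :
    ∫⁻ r in Ioc s 1, ENNReal.ofReal r *
        (ENNReal.ofReal (majorantKernel s r) * ENNReal.ofReal (schurWeight r))
      ≤ ENNReal.ofReal (schurWeight s) := by
  have hs2 : 0 < 1 - s ^ 2 := by nlinarith
  have key : ∀ r ∈ Ioo s 1, r * (r * s ^ 2 / (1 - s ^ 2) * schurWeight r)
      ≤ s ^ 2 / (1 - s ^ 2) * (√(1 - r))⁻¹ := by
    rintro r ⟨hsr, hr⟩
    have : 0 < √(1 - r) := Real.sqrt_pos.2 (by linarith)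
    obtain ⟨p, hp, rfl⟩ := exists_pos_sq_eq (hs0.trans hsr)
    have hp1 : p < 1 := by nlinarith
    rw [schurWeight, Real.sqrt_sq hp.le]
    field_simp
    nlinarith [pow_le_one₀ hp.le hp1.le (n := 3)]
  have final : s ^ 2 / (1 - s ^ 2) * (2 * √(1 - s)) ≤ schurWeight s := by
    have : 0 < √(1 - s) := Real.sqrt_pos.2 (by linarith)
    have hs1' : √(1 - s) ^ 2 = 1 - s := Real.sq_sqrt (by linarith)
    obtain ⟨p, hp, rfl⟩ := exists_pos_sq_eq hs0
    have hp1 : p < 1 := by nlinarith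
    rw [schurWeight, Real.sqrt_sq hp.le, div_mul_eq_mul_div, div_le_iff₀ hs2]
    field_simp
    rw [hs1']
    have h5 : 2 * p ^ 5 ≤ 1 + p ^ 2 := by
      nlinarith [pow_le_one₀ hp.le hp1.le (n := 5),
        pow_le_pow_of_le_one hp.le hp1.le (by norm_num : 2 ≤ 5)]
    nlinarith [mul_le_mul_of_nonneg_left h5 (by linarith : (0:ℝ) ≤ 1 - p ^ 2)]
  calc _ ≤ ENNReal.ofReal (s ^ 2 / (1 - s ^ 2) * (2 * √(1 - s))) := by
        refine lintegral_Ioc_le_ofReal_mul_of_le (by positivity) (fun r hr => ?_)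
          (lintegral_Ioc_inv_sqrt_one_sub hs1.le).le
        have : 0 < r := hs0.trans hr.1
        rw [majorantKernel, if_neg (not_le.2 hr.1),
          ofReal_mul_ofReal_mul_ofReal this.le (by positivity)]
        exact ofReal_le_ofReal (key r hr)
    _ ≤ ENNReal.ofReal (schurWeight s) := ofReal_le_ofReal final

theorem schur_col_lower_le {r : ℝ} (hr0 : 0 < r) (hr1 : r < 1) :
    ∫⁻ s in Ioc 0 r, ENNReal.ofReal s *
        (ENNReal.ofReal (schurWeight s) * ENNReal.ofReal (majorantKernel s r))
      ≤ ENNReal.ofReal (schurWeight r) := by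
  have key : ∀ s ∈ Ioo 0 r, s * (schurWeight s * (r * s ^ 2 / (1 - s ^ 2)))
      ≤ r / 2 * ((1 - s) * √(1 - s))⁻¹ := by
    rintro s ⟨hs, hsr⟩
    have : 0 < √(1 - s) := Real.sqrt_pos.2 (by linarith)
    have : 0 < 1 - s := by linarith
    obtain ⟨p, hp, rfl⟩ := exists_pos_sq_eq hs
    have hp1 : p < 1 := by nlinarith
    have : 0 < 1 - p ^ 4 := by nlinarith [pow_lt_one₀ hp.le hp1 (n := 4) (by norm_num)]
    rw [schurWeight, Real.sqrt_sq hp.le]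
    field_simp
    have h5 : 2 * p ^ 5 ≤ 1 + p ^ 2 := by
      nlinarith [pow_le_one₀ hp.le hp1.le (n := 5),
        pow_le_pow_of_le_one hp.le hp1.le (by norm_num : 2 ≤ 5)]
    nlinarith [mul_le_mul_of_nonneg_left h5 (by nlinarith : (0:ℝ) ≤ r * (1 - p ^ 2))]
  have final : r / 2 * (2 * (√(1 - r))⁻¹) ≤ schurWeight r := by
    have : 0 < √(1 - r) := Real.sqrt_pos.2 (by linarith)
    obtain ⟨p, hp, rfl⟩ := exists_pos_sq_eq hr0
    have hp1 : p < 1 := by nlinarith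
    rw [schurWeight, Real.sqrt_sq hp.le]
    field_simp
    nlinarith [pow_le_one₀ hp.le hp1.le (n := 3)]
  calc _ ≤ ENNReal.ofReal (r / 2 * (2 * (√(1 - r))⁻¹)) := by
        refine lintegral_Ioc_le_ofReal_mul_of_le (by positivity) (fun s hs => ?_)
          (lintegral_Ioc_inv_one_sub_mul_sqrt_le hr0.le hr1)
        rw [majorantKernel, if_neg (not_le.2 hs.2),
          ofReal_mul_ofReal_mul_ofReal hs.1.le (schurWeight_nonneg s)]
        exact ofReal_le_ofReal (key s hs)
    _ ≤ ENNReal.ofReal (schurWeight r) := ofReal_le_ofReal final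

theorem schur_col_upper_le {r : ℝ} (hr0 : 0 < r) (hr1 : r < 1) :
    ∫⁻ s in Ioc r 1, ENNReal.ofReal s *
        (ENNReal.ofReal (schurWeight s) * ENNReal.ofReal (majorantKernel s r))
      ≤ ENNReal.ofReal (2 * schurWeight r) := by
  have h1r : 0 < 1 - r := by linarith
  have key : ∀ s ∈ Ioo r 1, s * (schurWeight s * (1 / (s * (1 - r))))
      ≤ ((1 - r) * √r)⁻¹ * (√(1 - s))⁻¹ := by
    rintro s ⟨hrs, hs⟩
    have : √r ≤ √s := Real.sqrt_le_sqrt hrs.le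
    have : 0 < √r := Real.sqrt_pos.2 hr0
    have : 0 < s := hr0.trans hrs
    have : 0 < √(1 - s) := Real.sqrt_pos.2 (by linarith)
    rw [schurWeight]
    field_simp
    nlinarith
  calc _ ≤ ENNReal.ofReal (((1 - r) * √r)⁻¹ * (2 * √(1 - r))) := by
        refine lintegral_Ioc_le_ofReal_mul_of_le (by positivity) (fun s hs => ?_)
          (lintegral_Ioc_inv_sqrt_one_sub hr1.le).le
        rw [majorantKernel, if_pos hs.1.le,
          ofReal_mul_ofReal_mul_ofReal (hr0.trans hs.1).le (schurWeight_nonneg s)]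
        exact ofReal_le_ofReal (key s hs)
    _ = ENNReal.ofReal (2 * schurWeight r) := by
        have : 0 < √(1 - r) := Real.sqrt_pos.2 h1r
        rw [schurWeight]
        congr 1
        field_simp
        exact Real.sq_sqrt h1r.le

theorem schur_row_le {s : ℝ} (hs : s ∈ Ioo 0 1) :
    ∫⁻ r, ENNReal.ofReal (majorantKernel s r) * ENNReal.ofReal (schurWeight r) ∂radialMeasure
      ≤ 3 * ENNReal.ofReal (schurWeight s) := by
  obtain ⟨hs0, hs1⟩ := hs
  rw [lintegral_radialMeasure, ← Ioc_union_Ioc_eq_Ioc hs0.le hs1.le,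
    lintegral_union measurableSet_Ioc (Ioc_disjoint_Ioc_of_le (le_refl s))]
  calc _ ≤ ENNReal.ofReal (2 * schurWeight s) + ENNReal.ofReal (schurWeight s) :=
        add_le_add (schur_row_lower_le hs0 hs1) (schur_row_upper_le hs0 hs1)
    _ = 3 * ENNReal.ofReal (schurWeight s) := by
        rw [ofReal_mul zero_le_two, ofReal_ofNat]; ring

theorem schur_col_le {r : ℝ} (hr : r ∈ Ioo 0 1) :
    ∫⁻ s, ENNReal.ofReal (schurWeight s) * ENNReal.ofReal (majorantKernel s r) ∂radialMeasure
      ≤ 3 * ENNReal.ofReal (schurWeight r) := by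
  obtain ⟨hr0, hr1⟩ := hr
  rw [lintegral_radialMeasure, ← Ioc_union_Ioc_eq_Ioc hr0.le hr1.le,
    lintegral_union measurableSet_Ioc (Ioc_disjoint_Ioc_of_le (le_refl r))]
  calc _ ≤ ENNReal.ofReal (schurWeight r) + ENNReal.ofReal (2 * schurWeight r) :=
        add_le_add (schur_col_lower_le hr0 hr1) (schur_col_upper_le hr0 hr1)
    _ = 3 * ENNReal.ofReal (schurWeight r) := by
        rw [ofReal_mul zero_le_two, ofReal_ofNat]; ring

/-- For every `l ≤ −1`, `T_l` is bounded on `L²([0,1], r dr)` with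
`‖T_l f‖² ≤ 25 ‖f‖²`, uniformly in `l`. -/
theorem Tl_neg_bounded (l : ℤ) (hl : l ≤ -1) (f : ℝ → ℂ)
    (hfm : AEStronglyMeasurable f (volume.restrict (Set.Ioc (0:ℝ) 1)))
    (hf : IntegrableOn (fun r : ℝ => ‖f r‖ ^ 2 * r) (Set.Ioc (0:ℝ) 1)) :
    (∫ s in Set.Ioc (0:ℝ) 1, ‖Tl l f s‖ ^ 2 * s)
      ≤ 25 * ∫ r in Set.Ioc (0:ℝ) 1, ‖f r‖ ^ 2 * r := by
  have hT : ∀ᵐ s ∂radialMeasure, ‖Tl l f s‖ₑ ^ 2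
      ≤ (∫⁻ r, ENNReal.ofReal (majorantKernel s r) * ‖f r‖ₑ ∂radialMeasure) ^ 2 :=
    ae_radialMeasure_mem_Ioo.mono fun s hs => by gcongr; exact enorm_Tl_le hl f hs
  have hschur := lintegral_sq_lintegral_mul_le_of_schur measurable_majorantKernel.ennreal_ofReal
    measurable_schurWeight.ennreal_ofReal
    (ae_radialMeasure_mem_Ioo.mono fun x hx => (ofReal_pos.2 (schurWeight_pos hx)).ne')
    (ae_of_all _ fun _ => ofReal_ne_top) (ae_radialMeasure_mem_Ioo.mono fun _ => schur_row_le)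
    (ae_radialMeasure_mem_Ioo.mono fun _ => schur_col_le)
    (hfm.enorm.mono_ac (withDensity_absolutelyContinuous _ _))
  have hRHS : 0 ≤ ∫ r in Ioc 0 1, ‖f r‖ ^ 2 * r :=
    setIntegral_nonneg measurableSet_Ioc fun r hr => by have := hr.1; positivity
  refine (ofReal_le_ofReal_iff (by positivity)).1 ?_
  calc ENNReal.ofReal (∫ s in Ioc 0 1, ‖Tl l f s‖ ^ 2 * s)
      ≤ ∫⁻ s, ‖Tl l f s‖ₑ ^ 2 ∂radialMeasure := ofReal_setIntegral_le_lintegral_radialMeasure _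
    _ ≤ 3 * 3 * ∫⁻ r, ‖f r‖ₑ ^ 2 ∂radialMeasure := (lintegral_mono_ae hT).trans hschur
    _ ≤ 25 * ∫⁻ r, ‖f r‖ₑ ^ 2 ∂radialMeasure := by gcongr; norm_num
    _ = ENNReal.ofReal (25 * ∫ r in Ioc 0 1, ‖f r‖ ^ 2 * r) := by
        rw [ofReal_mul (by norm_num), ofReal_ofNat,
          ofReal_setIntegral_eq_lintegral_radialMeasure hf]
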